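/- Let a, b, c, d > 0 and let x, y : ℝ → ℝ be differentiable functions with x(t) ≥ 0 and y(t) ≥ 0 for all t ≥ 0, satisfying x'(t) = a − b·x(t) − x(t)·y(t) and y'(t) = c − d·y(t) + x(t)·y(t) for all t ≥ 0. Then limsup_{t→∞} (x(t) + y(t)) ≤ (b+d)(a+c)/(bd). -/

import Mathlib

/-! The total mass `s = x + y` satisfies `s' = a + c - b x - d y ≤ (a + c) - min b d * s` on the
nonnegative orthant, so by Grönwall `s` approaches `(a + c) / min b d ≤ (a + c) (1 / b + 1 / d)`
exponentially fast. -/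

open Filter Topology

lemma tendsto_gronwallBound_atTop_of_neg {K : ℝ} (δ ε : ℝ) (hK : K < 0) :
    Tendsto (gronwallBound δ K ε) atTop (𝓝 (-(ε / K))) := by
  have hexp : Tendsto (fun t => Real.exp (K * t)) atTop (𝓝 0) :=
    Real.tendsto_exp_atBot.comp (tendsto_id.const_mul_atTop_of_neg hK)
  rw [gronwallBound_of_K_ne_0 hK.ne]
  convert (hexp.const_mul δ).add ((hexp.sub_const 1).const_mul (ε / K)) using 2
  ring

lemma le_gronwallBound_of_deriv_add_mul_le {f : ℝ → ℝ} {m K : ℝ} (hf : Differentiable ℝ f)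
    (h : ∀ t, 0 ≤ t → deriv f t + m * f t ≤ K) {t : ℝ} (ht : 0 ≤ t) :
    f t ≤ gronwallBound (f 0) (-m) K t := by
  simpa using le_gronwallBound_of_liminf_deriv_right_le hf.continuous.continuousOn
    (fun s _ _ hr => (hf s).hasDerivAt.hasDerivWithinAt.liminf_right_slope_le hr) le_rfl
    (fun s hs => by linarith [h s hs.1]) t ⟨ht, le_rfl⟩

lemma inv_min_le_inv_add_inv {b d : ℝ} (hb : 0 < b) (hd : 0 < d) :
    (min b d)⁻¹ ≤ b⁻¹ + d⁻¹ := by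
  rcases min_choice b d with h | h <;> rw [h]
  · exact le_add_of_nonneg_right (inv_nonneg.2 hd.le)
  · exact le_add_of_nonneg_left (inv_nonneg.2 hb.le)

theorem stmt_0 (a b c d : ℝ) (ha : 0 < a) (hb : 0 < b) (hc : 0 < c) (hd : 0 < d)
    (x y : ℝ → ℝ) (hx : Differentiable ℝ x) (hy : Differentiable ℝ y)
    (hxnn : ∀ t : ℝ, 0 ≤ t → 0 ≤ x t) (hynn : ∀ t : ℝ, 0 ≤ t → 0 ≤ y t)
    (hxd : ∀ t : ℝ, 0 ≤ t → deriv x t = a - b * x t - x t * y t)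
    (hyd : ∀ t : ℝ, 0 ≤ t → deriv y t = c - d * y t + x t * y t) :
    limsup (fun t => x t + y t) atTop ≤ (b + d) * (a + c) / (b * d) := by
  set m := min b d
  have hmass : ∀ t, 0 ≤ t → deriv (fun t => x t + y t) t + m * (x t + y t) ≤ a + c := by
    intro t ht
    rw [deriv_fun_add (hx t) (hy t), hxd t ht, hyd t ht]
    linarith [mul_le_mul_of_nonneg_right (min_le_left b d) (hxnn t ht),
      mul_le_mul_of_nonneg_right (min_le_right b d) (hynn t ht)]
  have hbound : ∀ᶠ t in atTop, x t + y t ≤ gronwallBound (x 0 + y 0) (-m) (a + c) t :=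
    (eventually_ge_atTop 0).mono fun t ht =>
      le_gronwallBound_of_deriv_add_mul_le (f := fun t => x t + y t) (hx.add hy) hmass ht
  have hlim := tendsto_gronwallBound_atTop_of_neg (x 0 + y 0) (a + c) (neg_lt_zero.2 (lt_min hb hd))
  have hcobdd : IsCoboundedUnder (· ≤ ·) atTop (fun t => x t + y t) :=
    isCoboundedUnder_le_of_eventually_le atTop ((eventually_ge_atTop 0).mono fun t ht =>
      add_nonneg (hxnn t ht) (hynn t ht))
  calc limsup (fun t => x t + y t) atTop ≤ -((a + c) / -m) :=
        (limsup_le_limsup hbound hcobdd hlim.isBoundedUnder_le).trans hlim.limsup_eq.le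
    _ = (a + c) * m⁻¹ := by rw [div_neg, neg_neg, div_eq_mul_inv]
    _ ≤ (a + c) * (b⁻¹ + d⁻¹) := by gcongr; exact inv_min_le_inv_add_inv hb hd
    _ = (b + d) * (a + c) / (b * d) := by field_simp; ring
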